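/- Newton-type identity for Hall–Littlewood elements: let q be a rational number with q ∉ {0, ±1} (e.g. a prime power). For every partition λ with |λ| = n ≥ 1, Σ_{u=0}^{n−1} (−1)^u Σ_{μ: |μ| = n−u} q^{−n(μ)} (q;q)_{ℓ(μ)−1} ∏_{i≥1} [λ'_i − λ'_{i+1} choose λ'_i − μ'_i]_{1/q} equals (−1)^{n−1} n if λ = (1^n) and equals 0 otherwise. (This is the expansion in the basis {P_λ} of the Hall-algebra identity Σ_{r=0}^{n−1} (−1)^r p_{n−r} * e_r = (−1)^{n−1} n e_n.) -/

import Mathlib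

open scoped BigOperators

/-- A partition: a weakly decreasing, finitely supported sequence of
nonnegative integers, indexed from `0` (so `parts 0` is `λ₁`). -/
structure Ptn where
  parts : ℕ → ℕ
  antitone' : Antitone parts
  exists_zero : ∃ N, parts N = 0

namespace Ptn

/-- `|λ| = Σᵢ λᵢ`. -/
noncomputable def size (l : Ptn) : ℕ := ∑ᶠ j, l.parts j

/-- `ℓ(λ)`, the number of nonzero parts. -/
noncomputable def len (l : Ptn) : ℕ := Set.ncard {j | l.parts j ≠ 0}

/-- `n(λ) = Σᵢ (i-1) λᵢ` (with 1-based `i`). -/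
noncomputable def nstat (l : Ptn) : ℕ := ∑ᶠ j, j * l.parts j

/-- `λ'ᵢ = #{j : λⱼ ≥ i}`, the transpose partition (meaningful for `i ≥ 1`). -/
noncomputable def conj (l : Ptn) (i : ℕ) : ℕ := Set.ncard {j | i ≤ l.parts j}

/-- `mᵢ(λ) = #{j : λⱼ = i}` (meaningful for `i ≥ 1`). -/
noncomputable def mult (l : Ptn) (i : ℕ) : ℕ := Set.ncard {j | l.parts j = i}

/-- The partition `(1^n)`. -/
def onePow (n : ℕ) : Ptn where
  parts := fun j => if j < n then 1 else 0
  antitone' := by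
    intro a b hab
    simp only
    split_ifs <;> omega
  exists_zero := ⟨n, by simp⟩

/-- The one-row partition `(n)`. -/
def single (n : ℕ) : Ptn where
  parts := fun j => if j = 0 then n else 0
  antitone' := by
    intro a b hab
    simp only
    split_ifs <;> omega
  exists_zero := ⟨n + 1, by simp⟩

/-- The empty partition. -/
def empty : Ptn := onePow 0

end Ptn

/-- The q-Pochhammer symbol `(x;t)_n = ∏_{i=1}^n (1 - x t^{i-1})`. -/
def qPoch {K : Type*} [CommRing K] (x t : K) (n : ℕ) : K :=
  ∏ i ∈ Finset.range n, (1 - x * t ^ i)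

/-- The Gaussian binomial coefficient `[n choose r]_t`, zero for `r > n`. -/
noncomputable def qBinom {K : Type*} [Field K] (t : K) (n r : ℕ) : K :=
  if r ≤ n then qPoch t t n / (qPoch t t r * qPoch t t (n - r)) else 0

/-- The Gaussian binomial coefficient with integer arguments,
zero outside `0 ≤ r ≤ n`. -/
noncomputable def qBinomZ {K : Type*} [Field K] (t : K) (n r : ℤ) : K :=
  if 0 ≤ r ∧ r ≤ n then
    qPoch t t n.toNat / (qPoch t t r.toNat * qPoch t t (n - r).toNat)
  else 0

/-- `I_λ = ⊕ᵢ k[X]/(X^{λᵢ})`, a module over `k[X]` on which `X` acts nilpotently. -/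
def Imod (k : Type*) [Field k] (l : Ptn) : Type _ :=
  ∀ i : Fin l.len, Polynomial k ⧸ Ideal.span {(Polynomial.X : Polynomial k) ^ l.parts (i : ℕ)}

noncomputable instance (k : Type*) [Field k] (l : Ptn) : AddCommGroup (Imod k l) :=
  inferInstanceAs (AddCommGroup
    (∀ i : Fin l.len, Polynomial k ⧸ Ideal.span {(Polynomial.X : Polynomial k) ^ l.parts (i : ℕ)}))

noncomputable instance (k : Type*) [Field k] (l : Ptn) : Module (Polynomial k) (Imod k l) :=
  inferInstanceAs (Module (Polynomial k)
    (∀ i : Fin l.len, Polynomial k ⧸ Ideal.span {(Polynomial.X : Polynomial k) ^ l.parts (i : ℕ)}))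

/-- The Hall number `g^λ_{μ,ν}`: the number of `k[X]`-submodules `N ⊆ I_λ` with
`N ≅ I_ν` and `I_λ/N ≅ I_μ`. -/
noncomputable def hallNum (k : Type*) [Field k] (l m n : Ptn) : ℕ :=
  Nat.card {N : Submodule (Polynomial k) (Imod k l) //
    Nonempty ((↥N) ≃ₗ[Polynomial k] Imod k n) ∧
    Nonempty ((Imod k l ⧸ N) ≃ₗ[Polynomial k] Imod k m)}

/-- `a_λ`, the number of `k[X]`-module automorphisms of `I_λ`. -/
noncomputable def aut (k : Type*) [Field k] (l : Ptn) : ℕ :=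
  Nat.card (Imod k l ≃ₗ[Polynomial k] Imod k l)

/-!
The summand vanishes unless `μ` interlaces `λ`, i.e. `λ'ᵢ₊₁ ≤ μ'ᵢ ≤ λ'ᵢ` for all `i`, so `μ` runs
over the points `(μ'₁, …, μ'_{λ₁})` of the box `∏ᵢ [λ'ᵢ₊₁, λ'ᵢ]` other than the origin. As
`n(μ) = Σᵢ C(μ'ᵢ, 2)` and `|μ| = Σᵢ μ'ᵢ`, each signed summand is `(-1)^n` times a product of
weights of the single columns, the first column also carrying `(q;q)_{μ'₁-1}`.
If `λ₁ ≥ 2`, the origin is not in the box, the sum factorises and, with `t = 1/q`, the last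
column contributes `Σ_v (-1)^v t^{C(v,2)} [λ'_{λ₁}, v]_t = (1;t)_{λ'_{λ₁}} = 0` by Rothe's
`q`-binomial theorem. If `λ = (1^n)` there is a single column, and
`q^{-C(v,2)} (q;q)_{v-1} = (-1)^{v-1} (t;t)_{v-1}` turns the sum into
`-Σ_{j<n} (t;t)_j [n, j+1]_t = -n`.
-/

open Finset

namespace Ptn

@[ext]
lemma ext {a b : Ptn} (h : a.parts = b.parts) : a = b := by
  cases a; cases b; simp_all

variable (l : Ptn)

lemma parts_le_parts_zero (j : ℕ) : l.parts j ≤ l.parts 0 := l.antitone' (Nat.zero_le j)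

lemma lt_conj_succ_iff (i j : ℕ) : j < l.conj (i + 1) ↔ i + 1 ≤ l.parts j := by
  have hex : ∃ k, l.parts k < i + 1 := by
    obtain ⟨N, hN⟩ := l.exists_zero
    exact ⟨N, by omega⟩
  have hset : {j | i + 1 ≤ l.parts j} = Set.Iio (Nat.find hex) := by
    ext j
    simp only [Set.mem_ofPred_eq, Set.mem_Iio, Nat.lt_find_iff, not_lt]
    exact ⟨fun h m hm => h.trans (l.antitone' hm), fun h => h j le_rfl⟩
  rw [conj, hset, Set.ncard_Iio_nat, Nat.lt_find_iff]
  exact ⟨fun h => not_lt.1 (h j le_rfl), fun h m hm => not_lt.2 (h.trans (l.antitone' hm))⟩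

lemma conj_succ_eq_zero {i : ℕ} (h : l.parts 0 ≤ i) : l.conj (i + 1) = 0 := by
  by_contra h'
  have := (l.lt_conj_succ_iff i 0).1 (by omega)
  omega

lemma conj_succ_le_conj_succ {i j : ℕ} (h : i ≤ j) : l.conj (j + 1) ≤ l.conj (i + 1) :=
  le_of_forall_lt fun k hk =>
    (l.lt_conj_succ_iff i k).2 (le_trans (by omega) ((l.lt_conj_succ_iff j k).1 hk))

lemma len_eq_conj_one : l.len = l.conj 1 := by
  simp only [len, conj, Nat.one_le_iff_ne_zero]

lemma finsum_parts_mul (w : ℕ → ℕ) {M : ℕ} (hM : l.parts 0 ≤ M) :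
    ∑ᶠ j, l.parts j * w j = ∑ i ∈ range M, ∑ j ∈ range (l.conj (i + 1)), w j := by
  obtain ⟨N, hN⟩ := l.exists_zero
  have hsupp : Function.support (fun j => l.parts j * w j) ⊆ range N := by
    intro j hj
    by_contra hjN
    have := l.antitone' (le_of_not_gt (by simpa using hjN))
    simp_all
  have hrow (j : ℕ) : l.parts j * w j = ∑ i ∈ range M, if i + 1 ≤ l.parts j then w j else 0 := by
    rw [← sum_filter, sum_const, smul_eq_mul,
      show {i ∈ range M | i + 1 ≤ l.parts j} = range (l.parts j) by
        ext i; simp only [mem_filter, mem_range]; have := l.parts_le_parts_zero j; omega,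
      card_range]
  have hcol (i : ℕ) : range (l.conj (i + 1)) = {j ∈ range N | i + 1 ≤ l.parts j} := by
    ext j
    simp only [mem_filter, mem_range, l.lt_conj_succ_iff]
    exact ⟨fun h => ⟨by by_contra h'; have := l.antitone' (le_of_not_gt h'); omega, h⟩, And.right⟩
  rw [finsum_eq_sum_of_support_subset _ hsupp, sum_congr rfl fun j _ => hrow j, sum_comm]
  exact sum_congr rfl fun i _ => by rw [hcol, sum_filter]

lemma size_eq_sum_conj {M : ℕ} (hM : l.parts 0 ≤ M) :
    l.size = ∑ i ∈ range M, l.conj (i + 1) := by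
  simpa [size] using l.finsum_parts_mul (fun _ => 1) hM

lemma nstat_eq_sum_choose {M : ℕ} (hM : l.parts 0 ≤ M) :
    l.nstat = ∑ i ∈ range M, (l.conj (i + 1)).choose 2 := by
  rw [nstat, funext fun j => mul_comm j (l.parts j), l.finsum_parts_mul (fun j => j) hM]
  simp only [sum_range_id, Nat.choose_two_right]

lemma size_eq_conj_one (h : l.parts 0 ≤ 1) : l.size = l.conj 1 := by
  rw [l.size_eq_sum_conj h, sum_range_one]

lemma eq_onePow_size (h : l.parts 0 ≤ 1) : l = onePow l.size := by
  rw [l.size_eq_conj_one h]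
  ext j
  have : j < l.conj 1 ↔ 1 ≤ l.parts j := l.lt_conj_succ_iff 0 j
  have := l.parts_le_parts_zero j
  simp only [onePow]
  split_ifs <;> omega

def ofConj {L : ℕ} (g : Fin L → ℕ) : Ptn where
  parts j := #{i | j < g i}
  antitone' _ _ h := card_le_card (monotone_filter_right _ fun _ _ hi => lt_of_le_of_lt h hi)
  exists_zero := ⟨univ.sup g, by simpa using fun i => le_sup (f := g) (mem_univ i)⟩

section OfConj

variable {L : ℕ} {g : Fin L → ℕ}

lemma parts_zero_ofConj_le : (ofConj g).parts 0 ≤ L :=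
  (card_filter_le _ _).trans (card_fin L).le

lemma conj_ofConj (hg : Antitone g) (i : Fin L) : (ofConj g).conj (i + 1) = g i := by
  refine eq_of_forall_lt_iff fun j => ?_
  rw [lt_conj_succ_iff]
  change i + 1 ≤ #{i' | j < g i'} ↔ j < g i
  constructor
  · intro h
    by_contra hj
    have : ({i' | j < g i'} : Finset (Fin L)) ⊆ Iio i := fun i' hi' => by
      simp only [mem_filter, mem_univ, true_and] at hi'
      exact mem_Iio.2 (lt_of_not_ge fun hii' => hj (hi'.trans_le (hg hii')))
    have := (card_le_card this).trans_eq (Fin.card_Iio i)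
    omega
  · intro hj
    have : Iic i ⊆ ({i' | j < g i'} : Finset (Fin L)) := fun i' hi' => by
      simpa using hj.trans_le (hg (mem_Iic.1 hi'))
    exact (Fin.card_Iic i).symm.trans_le (card_le_card this)

lemma ofConj_conj {μ : Ptn} (h : μ.parts 0 ≤ L) :
    ofConj (fun i : Fin L => μ.conj (i + 1)) = μ := by
  ext j
  change #{i : Fin L | j < μ.conj (i + 1)} = μ.parts j
  simp only [lt_conj_succ_iff, Nat.add_one_le_iff, Fin.card_filter_val_lt]
  exact min_eq_right ((μ.parts_le_parts_zero j).trans h)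

lemma size_ofConj (hg : Antitone g) : (ofConj g).size = ∑ i, g i := by
  rw [size_eq_sum_conj _ parts_zero_ofConj_le, ← Fin.sum_univ_eq_sum_range]
  exact sum_congr rfl fun i _ => conj_ofConj hg i

lemma nstat_ofConj (hg : Antitone g) : (ofConj g).nstat = ∑ i, (g i).choose 2 := by
  rw [nstat_eq_sum_choose _ parts_zero_ofConj_le,
    ← Fin.sum_univ_eq_sum_range fun i => ((ofConj g).conj (i + 1)).choose 2]
  exact sum_congr rfl fun i _ => by rw [conj_ofConj hg i]

lemma len_ofConj (hg : Antitone g) (hL : 0 < L) : (ofConj g).len = g ⟨0, hL⟩ := by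
  rw [len_eq_conj_one, ← conj_ofConj hg ⟨0, hL⟩]

end OfConj

noncomputable def interlacing (lam : Ptn) : Finset (Fin (lam.parts 0) → ℕ) :=
  Fintype.piFinset fun i => Icc (lam.conj (i + 2)) (lam.conj (i + 1))

section Interlacing

variable {lam : Ptn} {g : Fin (lam.parts 0) → ℕ}

lemma mem_interlacing : g ∈ lam.interlacing ↔
    ∀ i : Fin (lam.parts 0), lam.conj (i + 2) ≤ g i ∧ g i ≤ lam.conj (i + 1) := by
  simp only [interlacing, Fintype.mem_piFinset, mem_Icc]

lemma antitone_of_mem_interlacing (hg : g ∈ lam.interlacing) : Antitone g := by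
  intro i j hij
  rcases hij.eq_or_lt with rfl | hlt
  · rfl
  · exact ((mem_interlacing.1 hg j).2.trans (lam.conj_succ_le_conj_succ (Fin.lt_def.1 hlt))).trans
      (mem_interlacing.1 hg i).1

lemma sum_le_size_of_mem_interlacing (hg : g ∈ lam.interlacing) : ∑ i, g i ≤ lam.size := by
  rw [lam.size_eq_sum_conj le_rfl, ← Fin.sum_univ_eq_sum_range]
  exact sum_le_sum fun i _ => (mem_interlacing.1 hg i).2

lemma sum_filter_interlacing_of_parts_zero_eq_one {M : Type*} [AddCommMonoid M]
    (h1 : lam.parts 0 = 1) (F : (Fin (lam.parts 0) → ℕ) → M) :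
    ∑ g ∈ lam.interlacing with ∑ i, g i ≠ 0, F g = ∑ v ∈ range lam.size, F fun _ => v + 1 := by
  set z : Fin (lam.parts 0) := ⟨0, by omega⟩
  have hz (i : Fin (lam.parts 0)) : i = z := Fin.ext (by omega)
  have hsum (g : Fin (lam.parts 0) → ℕ) : ∑ i, g i = g z :=
    Fintype.sum_eq_single z fun i hi => absurd (hz i) hi
  have hmem {g : Fin (lam.parts 0) → ℕ} : g ∈ lam.interlacing ↔ g z ≤ lam.size := by
    rw [mem_interlacing, lam.size_eq_conj_one h1.le]
    refine ⟨fun h => (h z).2, fun h i => ?_⟩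
    rw [hz i]
    exact ⟨(lam.conj_succ_eq_zero h1.le).trans_le (Nat.zero_le _), h⟩
  refine sum_nbij' (fun g => g z - 1) (fun v _ => v + 1) (fun g hg => ?_) (fun v hv => ?_)
    (fun g hg => ?_) (fun v _ => Nat.add_sub_cancel v 1) (fun g hg => congrArg F ?_)
  · simp only [mem_filter, mem_range, hmem, hsum] at hg ⊢
    omega
  · simp only [mem_filter, mem_range, hmem, hsum] at hv ⊢
    omega
  all_goals
    simp only [mem_filter, hsum] at hg
    funext i
    rw [hz i]
    omega

end Interlacing

end Ptn

open Ptn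

lemma Nat.succ_choose_two (m : ℕ) : (m + 1).choose 2 = m.choose 2 + m := by
  rw [Nat.choose_succ_succ', Nat.choose_one_right, add_comm]

section QSeries

variable {R K : Type*} [CommRing R] [Field K]

lemma qPoch_zero (x t : R) : qPoch x t 0 = 1 := prod_range_zero _

lemma qPoch_succ (x t : R) (m : ℕ) : qPoch x t (m + 1) = qPoch x t m * (1 - x * t ^ m) :=
  prod_range_succ _ _

lemma qPoch_succ' (x t : R) (m : ℕ) : qPoch x t (m + 1) = (1 - x) * qPoch (x * t) t m := by
  simp only [qPoch, prod_range_succ', pow_zero, mul_one, pow_succ', mul_assoc, mul_comm]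

lemma qPoch_self_succ (t : R) (m : ℕ) : qPoch t t (m + 1) = qPoch t t m * (1 - t ^ (m + 1)) := by
  rw [qPoch_succ, pow_succ' t]

lemma qPoch_one_left (t : R) (m : ℕ) : qPoch 1 t (m + 1) = 0 := by
  simp [qPoch_succ']

lemma neg_one_pow_mul_inv_pow_choose_two_mul_qPoch {q : K} (hq : q ≠ 0) (m : ℕ) :
    (-1) ^ m * q⁻¹ ^ (m + 1).choose 2 * qPoch q q m = qPoch q⁻¹ q⁻¹ m := by
  induction m with
  | zero => simp [qPoch]
  | succ m ih =>
    have key : q⁻¹ ^ (m + 1) * (1 - q * q ^ m) = -(1 - q⁻¹ * q⁻¹ ^ m) := by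
      rw [← pow_succ', ← pow_succ', inv_pow, mul_sub, mul_one, inv_mul_cancel₀ (pow_ne_zero _ hq)]
      ring
    rw [Nat.succ_choose_two, pow_add, qPoch_succ, qPoch_succ, pow_succ]
    linear_combination (-(q⁻¹ ^ (m + 1) * (1 - q * q ^ m))) * ih - qPoch q⁻¹ q⁻¹ m * key

end QSeries

lemma qPoch_self_ne_zero {K : Type*} [Field K] [LinearOrder K] [IsStrictOrderedRing K] {t : K}
    (h1 : t ≠ 1) (hm1 : t ≠ -1) (m : ℕ) : qPoch t t m ≠ 0 := by
  refine prod_ne_zero_iff.2 fun i _ h => ?_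
  rw [← pow_succ', sub_eq_zero, eq_comm, pow_eq_one_iff_of_ne_zero i.succ_ne_zero] at h
  tauto

lemma sum_range_neg_one_pow_mul_sum_filter {R α : Type*} [CommRing R] (s : Finset α) (w : α → ℕ)
    (X : α → R) {n : ℕ} (hw : ∀ a ∈ s, w a ≤ n) :
    ∑ u ∈ range n, (-1) ^ u * ∑ a ∈ s with w a = n - u, X a
      = (-1) ^ n * ∑ a ∈ s with w a ≠ 0, (-1) ^ w a * X a := by
  have hpos : ∀ a ∈ s.filter (w · ≠ 0), n - w a ∈ range n := fun a ha => by
    have := hw a (mem_filter.1 ha).1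
    have := (mem_filter.1 ha).2
    exact mem_range.2 (by omega)
  rw [mul_sum, ← sum_fiberwise_of_maps_to hpos]
  refine sum_congr rfl fun u hu => ?_
  rw [filter_filter, mul_sum]
  have hu := mem_range.1 hu
  refine sum_congr (filter_congr fun a ha => by have := hw a ha; omega) fun a ha => ?_
  have := hw a (mem_filter.1 ha).1
  have := (mem_filter.1 ha).2
  rw [← mul_assoc, ← pow_add, show n + w a = u + 2 * w a by omega, pow_add, pow_mul, neg_one_sq,
    one_pow, mul_one]

section QBinom

variable {K : Type*} [Field K] {t : K}

lemma qBinom_of_lt {n r : ℕ} (h : n < r) : qBinom t n r = 0 := if_neg (by omega)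

variable (ht : ∀ m, qPoch t t m ≠ 0)
include ht

lemma qBinom_zero_right (n : ℕ) : qBinom t n 0 = 1 := by
  rw [qBinom, if_pos n.zero_le, Nat.sub_zero, qPoch_zero, one_mul, div_self (ht n)]

lemma qBinom_self (n : ℕ) : qBinom t n n = 1 := by
  rw [qBinom, if_pos le_rfl, Nat.sub_self, qPoch_zero, mul_one, div_self (ht n)]

lemma qBinom_succ_succ (n k : ℕ) :
    qBinom t (n + 1) (k + 1) = qBinom t n k + t ^ (k + 1) * qBinom t n (k + 1) := by
  rcases lt_trichotomy k n with hk | rfl | hk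
  · obtain ⟨a, rfl⟩ : ∃ a, n = k + a + 1 := ⟨n - k - 1, by omega⟩
    have hfac (m : ℕ) : 1 - t ^ (m + 1) ≠ 0 :=
      fun h => ht (m + 1) (by rw [qPoch_self_succ, h, mul_zero])
    simp only [qBinom, if_pos (show k + 1 ≤ k + a + 1 + 1 by omega),
      if_pos (show k ≤ k + a + 1 by omega), if_pos (show k + 1 ≤ k + a + 1 by omega),
      show k + a + 1 + 1 - (k + 1) = a + 1 by omega, show k + a + 1 - k = a + 1 by omega,
      show k + a + 1 - (k + 1) = a by omega, qPoch_self_succ t (k + a + 1),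
      qPoch_self_succ t (k + a), qPoch_self_succ t k, qPoch_self_succ t a]
    have := ht k; have := ht a; have := ht (k + a); have := hfac k; have := hfac a
    field_simp
    ring
  · rw [qBinom_self ht, qBinom_self ht, qBinom_of_lt (Nat.lt_succ_self k), mul_zero, add_zero]
  · rw [qBinom_of_lt hk, qBinom_of_lt (by omega), qBinom_of_lt (by omega), mul_zero, add_zero]

/-- Rothe's `q`-binomial theorem. -/
theorem sum_range_qBinom_mul_eq_qPoch (x : K) (m : ℕ) :
    ∑ v ∈ range (m + 1), (-1) ^ v * t ^ v.choose 2 * x ^ v * qBinom t m v = qPoch x t m := by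
  induction m generalizing x with
  | zero => simp [qBinom, qPoch]
  | succ m ih =>
    set a : ℕ → K := fun v => (-1) ^ v * t ^ v.choose 2 * x ^ v with ha
    have hnext (v : ℕ) : a (v + 1) = -x * (a v * t ^ v) := by
      simp only [ha, Nat.succ_choose_two]
      ring
    have hshift : ∑ v ∈ range (m + 1), a v * t ^ v * qBinom t m v
        = a 0 + ∑ v ∈ range (m + 1), a (v + 1) * (t ^ (v + 1) * qBinom t m (v + 1)) := by
      rw [sum_range_succ', sum_range_succ _ m, qBinom_of_lt (Nat.lt_succ_self m),
        qBinom_zero_right ht]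
      simp only [mul_assoc]
      ring
    calc ∑ v ∈ range (m + 2), a v * qBinom t (m + 1) v
        = ∑ v ∈ range (m + 1), a (v + 1) * qBinom t m v
          + ∑ v ∈ range (m + 1), a v * t ^ v * qBinom t m v := by
          rw [sum_range_succ', hshift, qBinom_zero_right ht]
          simp only [qBinom_succ_succ ht, mul_add, sum_add_distrib]
          ring
      _ = (1 - x) *
          ∑ v ∈ range (m + 1), (-1) ^ v * t ^ v.choose 2 * (x * t) ^ v * qBinom t m v := by
          rw [mul_sum, ← sum_add_distrib]
          refine sum_congr rfl fun v _ => ?_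
          rw [hnext, ha]
          ring
      _ = qPoch x t (m + 1) := by rw [ih, qPoch_succ']

theorem sum_range_neg_one_pow_mul_qBinom (m : ℕ) :
    ∑ v ∈ range (m + 2), (-1) ^ v * t ^ v.choose 2 * qBinom t (m + 1) v = 0 := by
  simpa [qPoch_one_left] using sum_range_qBinom_mul_eq_qPoch ht 1 (m + 1)

theorem sum_range_qPoch_mul_qBinom (n : ℕ) :
    ∑ j ∈ range n, qPoch t t j * qBinom t n (j + 1) = n := by
  induction n with
  | zero => simp
  | succ n ih =>
    have hpoch (j : ℕ) : qPoch t t (j + 1) * qBinom t n (j + 1)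
        + qPoch t t j * (t ^ (j + 1) * qBinom t n (j + 1)) = qPoch t t j * qBinom t n (j + 1) := by
      rw [qPoch_self_succ]
      ring
    calc ∑ j ∈ range (n + 1), qPoch t t j * qBinom t (n + 1) (j + 1)
        = qPoch t t 0 * qBinom t n 0 + ∑ j ∈ range n, qPoch t t (j + 1) * qBinom t n (j + 1)
          + ∑ j ∈ range n, qPoch t t j * (t ^ (j + 1) * qBinom t n (j + 1)) := by
          simp only [qBinom_succ_succ ht, mul_add, sum_add_distrib]
          rw [sum_range_succ', sum_range_succ _ n, qBinom_of_lt (Nat.lt_succ_self n)]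
          ring
      _ = (n + 1 : ℕ) := by
          rw [qPoch_zero, qBinom_zero_right ht, add_assoc, ← sum_add_distrib,
            sum_congr rfl fun j _ => hpoch j, ih]
          push_cast
          ring

end QBinom

section Coefficients

variable {K : Type*} [Field K]

lemma qBinomZ_zero_zero (t : K) : qBinomZ t 0 0 = 1 := by
  simp [qBinomZ, qPoch_zero]

lemma qBinomZ_natCast_sub (t : K) {a v : ℕ} (h : v ≤ a) :
    qBinomZ t a ((a : ℤ) - v) = qBinom t a v := by
  rw [qBinomZ, qBinom, if_pos (by omega), if_pos h, mul_comm]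
  congr 4 <;> omega

noncomputable def newtonTerm (q : K) (lam mu : Ptn) : K :=
  q ^ (-(mu.nstat : ℤ)) * qPoch q q (mu.len - 1) *
    ∏ᶠ i : ℕ, qBinomZ q⁻¹
      ((lam.conj (i + 1) : ℤ) - (lam.conj (i + 2) : ℤ))
      ((lam.conj (i + 1) : ℤ) - (mu.conj (i + 1) : ℤ))

lemma finprod_qBinomZ_eq_prod (t : K) {lam mu : Ptn} {M : ℕ} (hlam : lam.parts 0 ≤ M)
    (hmu : mu.parts 0 ≤ M) :
    ∏ᶠ i : ℕ, qBinomZ t ((lam.conj (i + 1) : ℤ) - (lam.conj (i + 2) : ℤ))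
        ((lam.conj (i + 1) : ℤ) - (mu.conj (i + 1) : ℤ))
      = ∏ i ∈ range M, qBinomZ t ((lam.conj (i + 1) : ℤ) - (lam.conj (i + 2) : ℤ))
        ((lam.conj (i + 1) : ℤ) - (mu.conj (i + 1) : ℤ)) := by
  refine finprod_eq_prod_of_mulSupport_subset _ fun i hi => mem_range.2 ?_
  by_contra hiM
  simp only [Function.mem_mulSupport] at hi
  refine hi ?_
  rw [lam.conj_succ_eq_zero (by omega), lam.conj_succ_eq_zero (by omega),
    mu.conj_succ_eq_zero (by omega)]
  exact qBinomZ_zero_zero t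

lemma conj_interlace_of_newtonTerm_ne_zero {q : K} {lam mu : Ptn}
    (h : newtonTerm q lam mu ≠ 0) (i : ℕ) :
    lam.conj (i + 2) ≤ mu.conj (i + 1) ∧ mu.conj (i + 1) ≤ lam.conj (i + 1) := by
  by_contra hi
  refine h ?_
  set M := max (lam.parts 0) (max (mu.parts 0) (i + 1))
  rw [newtonTerm, finprod_qBinomZ_eq_prod _ (M := M) (by omega) (by omega)]
  exact mul_eq_zero_of_right _ (prod_eq_zero (i := i) (mem_range.2 (by omega)) (if_neg (by omega)))

lemma finsum_newtonTerm_eq_sum_interlacing (q : K) (lam : Ptn) (m : ℕ) :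
    ∑ᶠ (mu : Ptn) (_ : mu.size = m), newtonTerm q lam mu
      = ∑ g ∈ lam.interlacing with ∑ i, g i = m, newtonTerm q lam (ofConj g) := by
  classical
  have hinj : Set.InjOn ofConj (lam.interlacing : Set (Fin (lam.parts 0) → ℕ)) := by
    intro g hg g' hg' h
    funext i
    rw [← conj_ofConj (antitone_of_mem_interlacing hg) i,
      ← conj_ofConj (antitone_of_mem_interlacing hg') i, h]
  rw [← sum_image fun g hg g' hg' => hinj (mem_filter.1 hg).1 (mem_filter.1 hg').1]
  refine finsum_cond_eq_sum_of_cond_iff _ fun {mu} hmu => ?_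
  have hint := conj_interlace_of_newtonTerm_ne_zero hmu
  have hmu0 : mu.parts 0 ≤ lam.parts 0 := by
    have := (hint (lam.parts 0)).2
    rw [lam.conj_succ_eq_zero le_rfl] at this
    exact not_lt.1 fun h => absurd ((mu.lt_conj_succ_iff _ 0).2 h) (by omega)
  have hg : (fun i : Fin (lam.parts 0) => mu.conj (i + 1)) ∈ lam.interlacing :=
    mem_interlacing.2 fun i => hint i
  constructor
  · intro hsize
    refine mem_image.2 ⟨_, mem_filter.2 ⟨hg, ?_⟩, ofConj_conj hmu0⟩
    rw [← size_ofConj (antitone_of_mem_interlacing hg), ofConj_conj hmu0, hsize]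
  · intro hmem
    obtain ⟨g, hgm, rfl⟩ := mem_image.1 hmem
    rw [size_ofConj (antitone_of_mem_interlacing (mem_filter.1 hgm).1)]
    exact (mem_filter.1 hgm).2

noncomputable def columnWeight (q : K) (lam : Ptn) (i v : ℕ) : K :=
  (-1) ^ v * q⁻¹ ^ v.choose 2 * (if i = 0 then qPoch q q (v - 1) else 1) *
    qBinomZ q⁻¹ ((lam.conj (i + 1) : ℤ) - (lam.conj (i + 2) : ℤ)) ((lam.conj (i + 1) : ℤ) - v)

lemma neg_one_pow_mul_newtonTerm_ofConj (q : K) {lam : Ptn} (hL : 0 < lam.parts 0)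
    {g : Fin (lam.parts 0) → ℕ} (hg : g ∈ lam.interlacing) :
    (-1) ^ (∑ i, g i) * newtonTerm q lam (ofConj g)
      = ∏ i : Fin (lam.parts 0), columnWeight q lam i (g i) := by
  have hanti := antitone_of_mem_interlacing hg
  have hcol : ∏ i : Fin (lam.parts 0), (if (i : ℕ) = 0 then qPoch q q (g i - 1) else 1)
      = qPoch q q (g ⟨0, hL⟩ - 1) := by
    rw [Fintype.prod_eq_single ⟨0, hL⟩ fun i hi => if_neg fun h => hi (Fin.ext h), if_pos rfl]
  rw [newtonTerm, finprod_qBinomZ_eq_prod _ le_rfl parts_zero_ofConj_le, nstat_ofConj hanti,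
    len_ofConj hanti hL, zpow_neg, zpow_natCast, ← inv_pow, ← Fin.prod_univ_eq_prod_range,
    ← hcol, ← prod_pow_eq_pow_sum, ← prod_pow_eq_pow_sum]
  simp only [columnWeight, prod_mul_distrib, conj_ofConj hanti]
  ring

theorem sum_neg_one_pow_mul_finsum_newtonTerm_eq (q : K) {lam : Ptn} (hL : 0 < lam.parts 0) :
    ∑ u ∈ range lam.size, (-1) ^ u *
        ∑ᶠ (mu : Ptn) (_ : mu.size = lam.size - u), newtonTerm q lam mu
      = (-1) ^ lam.size *
        ∑ g ∈ lam.interlacing with ∑ i, g i ≠ 0,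
          ∏ i : Fin (lam.parts 0), columnWeight q lam i (g i) := by
  simp only [finsum_newtonTerm_eq_sum_interlacing]
  rw [sum_range_neg_one_pow_mul_sum_filter _ _ _ fun g => sum_le_size_of_mem_interlacing]
  exact congrArg _ (sum_congr rfl fun g hg =>
    neg_one_pow_mul_newtonTerm_ofConj q hL (mem_filter.1 hg).1)

section Evaluation

variable {q : K} (ht : ∀ m, qPoch q⁻¹ q⁻¹ m ≠ 0)
include ht

lemma sum_interlacing_prod_columnWeight_eq_zero {lam : Ptn} (h2 : 2 ≤ lam.parts 0) :
    ∑ g ∈ lam.interlacing with ∑ i, g i ≠ 0,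
      ∏ i : Fin (lam.parts 0), columnWeight q lam i (g i) = 0 := by
  have hc2 : 0 < lam.conj 2 := (lam.lt_conj_succ_iff 1 0).2 h2
  rw [filter_true_of_mem fun g hg => ?nonzero, interlacing, ← prod_univ_sum]
  case nonzero =>
    have : lam.conj 2 ≤ g ⟨0, by omega⟩ := (mem_interlacing.1 hg ⟨0, by omega⟩).1
    have := single_le_sum (fun i _ => Nat.zero_le (g i)) (mem_univ (⟨0, by omega⟩ : Fin _))
    omega
  refine prod_eq_zero (mem_univ ⟨lam.parts 0 - 1, by omega⟩) ?_
  have hpos : 0 < lam.conj (lam.parts 0 - 1 + 1) := (lam.lt_conj_succ_iff _ 0).2 (by omega)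
  obtain ⟨b, hb⟩ : ∃ b, lam.conj (lam.parts 0 - 1 + 1) = b + 1 :=
    ⟨_, (Nat.sub_add_cancel hpos).symm⟩
  have hlast : lam.conj (lam.parts 0 - 1 + 2) = 0 := lam.conj_succ_eq_zero (by omega)
  simp only [columnWeight, hb, hlast, if_neg (show lam.parts 0 - 1 ≠ 0 by omega),
    mul_one, Nat.cast_zero, sub_zero, ← Nat.range_succ_eq_Icc_zero]
  rw [← sum_range_neg_one_pow_mul_qBinom ht b]
  refine sum_congr rfl fun v hv => ?_
  rw [qBinomZ_natCast_sub _ (Nat.lt_succ_iff.1 (mem_range.1 hv))]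

lemma sum_interlacing_prod_columnWeight_of_parts_zero_eq_one (hq : q ≠ 0) {lam : Ptn}
    (h1 : lam.parts 0 = 1) :
    ∑ g ∈ lam.interlacing with ∑ i, g i ≠ 0,
      ∏ i : Fin (lam.parts 0), columnWeight q lam i (g i) = -lam.size := by
  rw [sum_filter_interlacing_of_parts_zero_eq_one h1, ← neg_eq_iff_eq_neg, ← sum_neg_distrib,
    ← sum_range_qPoch_mul_qBinom ht]
  refine sum_congr rfl fun v hv => ?_
  rw [Fintype.prod_eq_single ⟨0, by omega⟩ fun i hi => absurd (Fin.ext (by omega)) hi,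
    columnWeight, if_pos rfl, ← lam.size_eq_conj_one h1.le, lam.conj_succ_eq_zero h1.le,
    Nat.cast_zero, sub_zero, qBinomZ_natCast_sub _ (mem_range.1 hv : v + 1 ≤ lam.size),
    Nat.add_sub_cancel, pow_succ]
  linear_combination qBinom q⁻¹ lam.size (v + 1) * neg_one_pow_mul_inv_pow_choose_two_mul_qPoch hq v

end Evaluation

end Coefficients

/-- Newton-type identity for Hall–Littlewood elements: for any rational
`q ∉ {0, ±1}` and any partition `λ` with `|λ| = n ≥ 1`,
`Σ_{u=0}^{n−1} (−1)^u Σ_{|μ|=n−u} q^{−n(μ)} (q;q)_{ℓ(μ)−1}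
   ∏_{i≥1} [λ'ᵢ−λ'_{i+1} choose λ'ᵢ−μ'ᵢ]_{1/q}`
equals `(−1)^{n−1} n` if `λ = (1^n)` and `0` otherwise. -/
theorem newton_identity (q : ℚ) (hq0 : q ≠ 0) (hq1 : q ≠ 1) (hqm1 : q ≠ -1)
    (n : ℕ) (hn : 1 ≤ n) (lam : Ptn) (hlam : lam.size = n) :
    (lam = Ptn.onePow n →
      ∑ u ∈ Finset.range n, (-1 : ℚ) ^ u *
        ∑ᶠ (mu : Ptn) (_ : mu.size = n - u),
          q ^ (-(mu.nstat : ℤ)) * qPoch q q (mu.len - 1) *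
            ∏ᶠ i : ℕ, qBinomZ q⁻¹
              ((lam.conj (i + 1) : ℤ) - (lam.conj (i + 2) : ℤ))
              ((lam.conj (i + 1) : ℤ) - (mu.conj (i + 1) : ℤ))
        = (-1 : ℚ) ^ (n - 1) * n) ∧
    (lam ≠ Ptn.onePow n →
      ∑ u ∈ Finset.range n, (-1 : ℚ) ^ u *
        ∑ᶠ (mu : Ptn) (_ : mu.size = n - u),
          q ^ (-(mu.nstat : ℤ)) * qPoch q q (mu.len - 1) *
            ∏ᶠ i : ℕ, qBinomZ q⁻¹
              ((lam.conj (i + 1) : ℤ) - (lam.conj (i + 2) : ℤ))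
              ((lam.conj (i + 1) : ℤ) - (mu.conj (i + 1) : ℤ))
        = 0) := by
  have ht : ∀ m, qPoch q⁻¹ q⁻¹ m ≠ 0 :=
    qPoch_self_ne_zero (inv_ne_one.2 hq1) (by rwa [ne_eq, inv_eq_iff_eq_inv, inv_neg, inv_one])
  have hL : 0 < lam.parts 0 := by
    by_contra h
    have := lam.size_eq_sum_conj (M := 0) (by omega)
    simp only [range_zero, sum_empty] at this
    omega
  have key := sum_neg_one_pow_mul_finsum_newtonTerm_eq q hL
  simp only [newtonTerm, hlam] at key
  rw [key]
  refine ⟨fun hone => ?_, fun hne => ?_⟩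
  · have h1 : lam.parts 0 = 1 := by rw [hone]; exact if_pos hn
    rw [sum_interlacing_prod_columnWeight_of_parts_zero_eq_one ht hq0 h1, hlam]
    obtain ⟨m, rfl⟩ := Nat.exists_eq_add_of_le' hn
    rw [pow_succ, Nat.add_sub_cancel]
    ring
  · refine (mul_eq_zero_of_right _ (sum_interlacing_prod_columnWeight_eq_zero ht ?_))
    by_contra h
    exact hne (hlam ▸ lam.eq_onePow_size (by omega))
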